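/- arXiv:2002.09020 — 7 statements merged into one kernel-verified Lean document; each statement's English description precedes it below -/
import Mathlib

section
/- Let G be a connected irregular graph on n ≥ 3 vertices with m edges, and let e = uv be an edge with deg(u) ≤ 2m/n and deg(v) ≤ 2m/n, such that G − e is connected. Then s(G) < s(G − e). -/
/-!
Deleting `e = uv` lowers the average degree by `δ = 2/n`, so every term `|deg w - 2m/n|` of
`s` drops by at most `δ`. The endpoints lie at or below the average and lose one unit of degree,
so their terms grow by `1 - δ` each; irregularity gives a vertex strictly above the average,
whose term grows by `δ`. Altogether `s(G - e) - s(G) ≥ 2(1 - δ) + δ - (n - 3)δ = 2δ > 0`.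
-/

open Finset

/-- The degree deviation measure `s(G) = ∑_v |deg(v) - 2m/n|`. -/
noncomputable def degDev {V : Type*} [Fintype V] [DecidableEq V]
    (G : SimpleGraph V) [DecidableRel G.Adj] : ℝ :=
  ∑ v : V, |(G.degree v : ℝ) - 2 * G.edgeFinset.card / (Fintype.card V)|

lemma Fintype.add_add_le_sum {ι M : Type*} [Fintype ι] [DecidableEq ι] [AddCommMonoid M]
    [PartialOrder M] [IsOrderedAddMonoid M] {f : ι → M} (hf : ∀ i, 0 ≤ f i) {i j k : ι}
    (hij : i ≠ j) (hik : i ≠ k) (hjk : j ≠ k) : f i + f j + f k ≤ ∑ l, f l :=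
  calc f i + f j + f k = ∑ l ∈ {i, j, k}, f l := by
        rw [sum_insert (by simp [hij, hik]), sum_pair hjk, add_assoc]
    _ ≤ ∑ l, f l := sum_le_sum_of_subset_of_nonneg (subset_univ _) fun l _ _ ↦ hf l

lemma sum_abs_lt_sum_abs_of_shift {ι : Type*} [Fintype ι] [DecidableEq ι] {x y : ι → ℝ} {δ : ℝ}
    (hδ : 0 < δ) (hcard : Fintype.card ι * δ ≤ 2) {i j k : ι} (hij : i ≠ j) (hik : i ≠ k)
    (hjk : j ≠ k) (hy : ∀ l, l ≠ i → l ≠ j → y l = x l + δ) (hyi : y i = x i - 1 + δ)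
    (hyj : y j = x j - 1 + δ) (hxi : x i ≤ 0) (hxj : x j ≤ 0) (hxk : 0 < x k) :
    ∑ l, |x l| < ∑ l, |y l| := by
  set gain : ι → ℝ := fun l ↦ |y l| + δ - |x l|
  have gain_endpoint {l : ι} (hyl : y l = x l - 1 + δ) (hxl : x l ≤ 0) : 1 ≤ gain l := by
    simp only [gain, hyl, abs_of_nonpos hxl]
    linarith [neg_abs_le (x l - 1 + δ)]
  have gain_shift {l : ι} (hyl : y l = x l + δ) : 0 ≤ gain l := by
    have := abs_sub_abs_le_abs_sub (x l) (x l + δ)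
    rw [sub_add_cancel_left, abs_neg, abs_of_pos hδ] at this
    simp only [gain, hyl]
    linarith
  have gain_nonneg (l : ι) : 0 ≤ gain l := by
    by_cases hli : l = i
    · subst hli; linarith [gain_endpoint hyi hxi]
    by_cases hlj : l = j
    · subst hlj; linarith [gain_endpoint hyj hxj]
    exact gain_shift (hy l hli hlj)
  have gain_k : 2 * δ ≤ gain k := by
    simp only [gain, hy k hik.symm hjk.symm, abs_of_pos hxk]
    linarith [le_abs_self (x k + δ)]
  have hsum : ∑ l, gain l = ∑ l, |y l| + Fintype.card ι * δ - ∑ l, |x l| := by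
    simp only [gain, sum_sub_distrib, sum_add_distrib, sum_const, card_univ, nsmul_eq_mul]
  linarith [Fintype.add_add_le_sum gain_nonneg hij hik hjk, gain_endpoint hyi hxi,
    gain_endpoint hyj hxj]

namespace SimpleGraph

variable {V : Type*} [Fintype V] (G : SimpleGraph V) [DecidableRel G.Adj]

noncomputable def averageDegree : ℝ := 2 * #G.edgeFinset / Fintype.card V

lemma sum_degree_eq_card_mul_averageDegree [Nonempty V] :
    ∑ v, (G.degree v : ℝ) = Fintype.card V * G.averageDegree := by
  rw [averageDegree, mul_div_cancel₀ _ (by positivity)]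
  exact_mod_cast G.sum_degrees_eq_twice_card_edges

lemma exists_averageDegree_lt_degree (h : ∃ a b, G.degree a ≠ G.degree b) :
    ∃ w, G.averageDegree < G.degree w := by
  obtain ⟨a, b, hab⟩ := h
  have : Nonempty V := ⟨a⟩
  by_contra! hle
  have hlt : ∃ w ∈ univ, (G.degree w : ℝ) < G.averageDegree := by
    rcases (hle a).lt_or_eq with ha | ha
    · exact ⟨a, mem_univ _, ha⟩
    · exact ⟨b, mem_univ _, (hle b).lt_of_ne fun hb ↦ hab (by exact_mod_cast ha.trans hb.symm)⟩
  have := sum_lt_sum (fun w _ ↦ hle w) hlt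
  simp [sum_degree_eq_card_mul_averageDegree] at this

variable [DecidableEq V]

lemma degDev_eq_sum_abs_sub_averageDegree :
    degDev G = ∑ x, |(G.degree x : ℝ) - G.averageDegree| := rfl

variable {G} {u v : V}

lemma card_edgeFinset_deleteEdges_singleton_add_one (h : G.Adj u v) :
    #(G.deleteEdges {s(u, v)}).edgeFinset + 1 = #G.edgeFinset := by
  have : (G.deleteEdges {s(u, v)}).edgeFinset = G.edgeFinset.erase s(u, v) := by
    ext e
    simp [and_comm]
  rw [this, card_erase_add_one (by simpa using h)]

lemma averageDegree_deleteEdges_singleton (h : G.Adj u v) :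
    (G.deleteEdges {s(u, v)}).averageDegree = G.averageDegree - 2 / Fintype.card V := by
  simp only [averageDegree, ← card_edgeFinset_deleteEdges_singleton_add_one h]
  push_cast
  ring

lemma neighborFinset_deleteEdges_singleton_left :
    (G.deleteEdges {s(u, v)}).neighborFinset u = (G.neighborFinset u).erase v := by
  ext w
  simp only [mem_neighborFinset, deleteEdges_adj, Set.mem_singleton_iff, mem_erase, Sym2.eq_iff]
  grind [G.loopless]

lemma degree_deleteEdges_singleton_left_add_one (h : G.Adj u v) :
    (G.deleteEdges {s(u, v)}).degree u + 1 = G.degree u := by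
  rw [← card_neighborFinset_eq_degree, neighborFinset_deleteEdges_singleton_left,
    card_erase_add_one (by simpa using h), card_neighborFinset_eq_degree]

lemma degree_deleteEdges_singleton_right_add_one (h : G.Adj u v) :
    (G.deleteEdges {s(u, v)}).degree v + 1 = G.degree v := by
  convert degree_deleteEdges_singleton_left_add_one h.symm using 4
  rw [Sym2.eq_swap]

lemma degree_deleteEdges_singleton_of_ne {w : V} (hu : w ≠ u) (hv : w ≠ v) :
    (G.deleteEdges {s(u, v)}).degree w = G.degree w := by
  simp only [← card_neighborFinset_eq_degree]
  congr 1
  ext x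
  simp only [mem_neighborFinset, deleteEdges_adj, Set.mem_singleton_iff, Sym2.eq_iff]
  grind

theorem degDev_lt_degDev_deleteEdges (hirr : ∃ a b, G.degree a ≠ G.degree b) (h : G.Adj u v)
    (hu : (G.degree u : ℝ) ≤ G.averageDegree) (hv : (G.degree v : ℝ) ≤ G.averageDegree) :
    degDev G < degDev (G.deleteEdges {s(u, v)}) := by
  have hV : 0 < (Fintype.card V : ℝ) := by have : Nonempty V := ⟨u⟩; positivity
  obtain ⟨w, hw⟩ := G.exists_averageDegree_lt_degree hirr
  have hwu : w ≠ u := by rintro rfl; linarith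
  have hwv : w ≠ v := by rintro rfl; linarith
  have hdu : ((G.deleteEdges {s(u, v)}).degree u : ℝ) = G.degree u - 1 := by
    rw [← degree_deleteEdges_singleton_left_add_one h]; push_cast; ring
  have hdv : ((G.deleteEdges {s(u, v)}).degree v : ℝ) = G.degree v - 1 := by
    rw [← degree_deleteEdges_singleton_right_add_one h]; push_cast; ring
  rw [degDev_eq_sum_abs_sub_averageDegree, degDev_eq_sum_abs_sub_averageDegree]
  refine sum_abs_lt_sum_abs_of_shift (by positivity) (mul_div_cancel₀ _ hV.ne').le h.ne
    hwu.symm hwv.symm (fun x hxu hxv ↦ ?_) ?_ ?_ (sub_nonpos.mpr hu) (sub_nonpos.mpr hv)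
    (sub_pos.mpr hw)
  · rw [degree_deleteEdges_singleton_of_ne hxu hxv, averageDegree_deleteEdges_singleton h]; ring
  · rw [hdu, averageDegree_deleteEdges_singleton h]; ring
  · rw [hdv, averageDegree_deleteEdges_singleton h]; ring

end SimpleGraph

theorem degDev_lt_deleteEdge_general {n : ℕ} (G : SimpleGraph (Fin n))
    [DecidableRel G.Adj]
    (hirr : ∃ u v, G.degree u ≠ G.degree v)
    (u v : Fin n) (hadj : G.Adj u v)
    (hu : (G.degree u : ℝ) ≤ 2 * G.edgeFinset.card / n)
    (hv : (G.degree v : ℝ) ≤ 2 * G.edgeFinset.card / n) :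
    degDev G < @degDev _ _ _ (G.deleteEdges {s(u, v)}) (Classical.decRel _) := by
  convert G.degDev_lt_degDev_deleteEdges hirr hadj (by simpa [SimpleGraph.averageDegree] using hu)
    (by simpa [SimpleGraph.averageDegree] using hv)

theorem degDev_lt_deleteEdge {n : ℕ} (hn : 3 ≤ n) (G : SimpleGraph (Fin n))
    [DecidableRel G.Adj] (hconn : G.Connected)
    (hirr : ∃ u v, G.degree u ≠ G.degree v)
    (u v : Fin n) (hadj : G.Adj u v)
    (hu : (G.degree u : ℝ) ≤ 2 * G.edgeFinset.card / n)
    (hv : (G.degree v : ℝ) ≤ 2 * G.edgeFinset.card / n)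
    (hconn' : (G.deleteEdges {s(u, v)}).Connected) :
    degDev G < @degDev _ _ _ (G.deleteEdges {s(u, v)}) (Classical.decRel _) :=
  degDev_lt_deleteEdge_general G hirr u v hadj hu hv
end

section
/- Let G be a connected irregular graph on n ≥ 3 vertices with m edges, and let w, z be non-adjacent distinct vertices with deg(w) > 2m/n and deg(z) > 2m/n. Then s(G) < s(G + wz), where G + wz is the graph obtained by adding the edge wz. -/
/-!
Adding the edge `wz` raises the mean degree `2m/n` by `2/n`. The endpoints `w`, `z` lie above the
mean and gain one neighbour each, so their deviations grow by `1 - 2/n`; some vertex lies below the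
mean (the degrees average to it and `w` is above it), and its deviation grows by `2/n`; each of the
remaining `n - 3` vertices loses at most `2/n`. The net change is at least
`2 (1 - 2/n) + 2/n - (n - 3) 2/n = 4/n > 0`.
-/

open Finset

section MeanDeviation

variable {K ι : Type*} [Field K] [LinearOrder K] [IsStrictOrderedRing K] [Fintype ι]

theorem exists_lt_of_lt_of_sum_eq {f : ι → K} {μ : K} (hsum : ∑ i, f i = Fintype.card ι * μ)
    {w : ι} (hw : μ < f w) : ∃ v, f v < μ := by
  by_contra! h
  have : ∑ _ : ι, μ < ∑ i, f i := sum_lt_sum (fun i _ ↦ h i) ⟨w, mem_univ w, hw⟩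
  simp [hsum] at this

theorem sum_sub_card_compl_mul_le_sum [DecidableEq ι] {f : ι → K} {δ : K} (s : Finset ι)
    (hf : ∀ i ∉ s, -δ ≤ f i) : ∑ i ∈ s, f i - #sᶜ * δ ≤ ∑ i, f i := by
  have : -(#sᶜ * δ) ≤ ∑ i ∈ sᶜ, f i := by
    simpa using card_nsmul_le_sum sᶜ f (-δ) fun i hi ↦ hf i (mem_compl.mp hi)
  linarith [sum_add_sum_compl s f]

theorem abs_add_one_sub_add {x μ δ : K} (hx : μ < x) (hδ : δ ≤ 1) :
    |x + 1 - (μ + δ)| = |x - μ| + (1 - δ) := by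
  rw [abs_of_pos (by linarith), abs_of_pos (by linarith)]
  ring

theorem abs_sub_add_of_lt {x μ δ : K} (hx : x < μ) (hδ : 0 ≤ δ) :
    |x - (μ + δ)| = |x - μ| + δ := by
  rw [abs_of_neg (by linarith), abs_of_neg (by linarith)]
  ring

theorem sum_abs_sub_lt_of_add_one_add_one [DecidableEq ι] (hι : 3 ≤ Fintype.card ι)
    {d d' : ι → K} {μ : K} (hsum : ∑ i, d i = Fintype.card ι * μ) {w z : ι} (hwz : w ≠ z)
    (hw : μ < d w) (hz : μ < d z) (hd'w : d' w = d w + 1) (hd'z : d' z = d z + 1)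
    (hd' : ∀ v, v ≠ w → v ≠ z → d' v = d v) :
    ∑ i, |d i - μ| < ∑ i, |d' i - (μ + 2 / Fintype.card ι)| := by
  have hN : (3 : K) ≤ Fintype.card ι := by exact_mod_cast hι
  set N : K := (Fintype.card ι : K)
  set δ := 2 / N
  have hNδ : N * δ = 2 := mul_div_cancel₀ 2 (by linarith : (0 : K) < N).ne'
  have hδ : 0 < δ := by positivity
  have hδ1 : δ ≤ 1 := by rw [div_le_one (by linarith)]; linarith
  obtain ⟨v₀, hv₀⟩ := exists_lt_of_lt_of_sum_eq hsum hw
  have hv₀w : v₀ ≠ w := by rintro rfl; linarith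
  have hv₀z : v₀ ≠ z := by rintro rfl; linarith
  set Δ : ι → K := fun i ↦ |d' i - (μ + δ)| - |d i - μ|
  have hΔw : Δ w = 1 - δ := by simp only [Δ, hd'w, abs_add_one_sub_add hw hδ1]; ring
  have hΔz : Δ z = 1 - δ := by simp only [Δ, hd'z, abs_add_one_sub_add hz hδ1]; ring
  have hΔv₀ : Δ v₀ = δ := by simp only [Δ, hd' v₀ hv₀w hv₀z, abs_sub_add_of_lt hv₀ hδ.le]; ring
  have hΔ : ∀ v ∉ ({w, z, v₀} : Finset ι), -δ ≤ Δ v := by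
    intro v hv
    simp only [mem_insert, mem_singleton, not_or] at hv
    simp only [Δ, hd' v hv.1 hv.2.1]
    have := abs_sub_abs_le_abs_sub (d v - μ) (d v - (μ + δ))
    rw [show d v - μ - (d v - (μ + δ)) = δ by ring, abs_of_pos hδ] at this
    linarith
  have hcard : (#({w, z, v₀} : Finset ι)ᶜ : K) = N - 3 := by
    rw [card_compl, card_insert_of_notMem (by simp [hwz, hv₀w.symm]),
      card_insert_of_notMem (by simp [hv₀z.symm]), card_singleton, Nat.cast_sub hι]
    norm_num [N]
  have hsum3 : ∑ i ∈ {w, z, v₀}, Δ i = Δ w + Δ z + Δ v₀ := by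
    rw [sum_insert (by simp [hwz, hv₀w.symm]), sum_pair hv₀z.symm, add_assoc]
  have hlower := sum_sub_card_compl_mul_le_sum {w, z, v₀} hΔ
  rw [hsum3, hcard, hΔw, hΔz, hΔv₀] at hlower
  have hpos : 0 < ∑ i, Δ i := by linarith
  simpa [Δ, sum_sub_distrib] using hpos

end MeanDeviation

namespace SimpleGraph

variable {V : Type*} [Fintype V] {G : SimpleGraph V} [DecidableRel G.Adj]

theorem sum_degrees_eq_card_mul_average :
    ∑ v, (G.degree v : ℝ) = Fintype.card V * (2 * #G.edgeFinset / Fintype.card V) := by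
  rcases isEmpty_or_nonempty V with hV | hV
  · simp
  rw [mul_div_cancel₀ _ (by positivity)]
  exact_mod_cast G.sum_degrees_eq_twice_card_edges

variable [DecidableEq V] {s t : V} [DecidableRel (G ⊔ edge s t).Adj]

theorem degree_sup_edge_left (hnadj : ¬G.Adj s t) (hst : s ≠ t) :
    (G ⊔ edge s t).degree s = G.degree s + 1 := by
  have : (G ⊔ edge s t).neighborFinset s = insert t (G.neighborFinset s) := by
    ext v
    simp only [mem_neighborFinset, mem_insert, sup_adj, edge_adj]
    grind
  rw [← card_neighborFinset_eq_degree, this, card_insert_of_notMem (by simpa),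
    card_neighborFinset_eq_degree]

theorem degree_sup_edge_right (hnadj : ¬G.Adj s t) (hst : s ≠ t) :
    (G ⊔ edge s t).degree t = G.degree t + 1 := by
  have : (G ⊔ edge s t).neighborFinset t = insert s (G.neighborFinset t) := by
    ext v
    simp only [mem_neighborFinset, mem_insert, sup_adj, edge_adj]
    grind
  rw [← card_neighborFinset_eq_degree, this, card_insert_of_notMem (by simpa [adj_comm]),
    card_neighborFinset_eq_degree]

theorem degree_sup_edge_of_ne {v : V} (hs : v ≠ s) (ht : v ≠ t) :
    (G ⊔ edge s t).degree v = G.degree v := by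
  simp_rw [← card_neighborFinset_eq_degree]
  congr 1
  ext u
  simp [edge_adj, hs, ht]

theorem degDev_lt_degDev_sup_edge (hV : 3 ≤ Fintype.card V) (hst : s ≠ t) (hnadj : ¬G.Adj s t)
    (hs : 2 * #G.edgeFinset / Fintype.card V < (G.degree s : ℝ))
    (ht : 2 * #G.edgeFinset / Fintype.card V < (G.degree t : ℝ)) :
    degDev G < degDev (G ⊔ edge s t) := by
  have hmean : ∀ [Fintype (G ⊔ edge s t).edgeSet],
      2 * (#(G ⊔ edge s t).edgeFinset : ℝ) / Fintype.card V =
        2 * #G.edgeFinset / Fintype.card V + 2 / Fintype.card V := by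
    intro
    rw [G.card_edgeFinset_sup_edge hnadj hst, Nat.cast_add_one, mul_add_one, add_div]
  rw [degDev, degDev]
  simp_rw [hmean]
  refine sum_abs_sub_lt_of_add_one_add_one hV sum_degrees_eq_card_mul_average hst hs ht
    ?_ ?_ fun v hvs hvt ↦ ?_
  · simp [degree_sup_edge_left hnadj hst]
  · simp [degree_sup_edge_right hnadj hst]
  · simp [degree_sup_edge_of_ne hvs hvt]

end SimpleGraph

theorem degDev_lt_addEdge_general {n : ℕ} (hn : 3 ≤ n) (G : SimpleGraph (Fin n))
    [DecidableRel G.Adj]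
    (w z : Fin n) (hwz : w ≠ z) (hnadj : ¬ G.Adj w z)
    (hw : 2 * G.edgeFinset.card / n < (G.degree w : ℝ))
    (hz : 2 * G.edgeFinset.card / n < (G.degree z : ℝ)) :
    degDev G <
      @degDev _ _ _ (G ⊔ SimpleGraph.fromEdgeSet {s(w, z)}) (Classical.decRel _) := by
  let : DecidableRel (G ⊔ SimpleGraph.edge w z).Adj := Classical.decRel _
  exact SimpleGraph.degDev_lt_degDev_sup_edge (by simpa) hwz hnadj (by simpa) (by simpa)

theorem degDev_lt_addEdge {n : ℕ} (hn : 3 ≤ n) (G : SimpleGraph (Fin n))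
    [DecidableRel G.Adj] (hconn : G.Connected)
    (hirr : ∃ u v, G.degree u ≠ G.degree v)
    (w z : Fin n) (hwz : w ≠ z) (hnadj : ¬ G.Adj w z)
    (hw : 2 * G.edgeFinset.card / n < (G.degree w : ℝ))
    (hz : 2 * G.edgeFinset.card / n < (G.degree z : ℝ)) :
    degDev G <
      @degDev _ _ _ (G ⊔ SimpleGraph.fromEdgeSet {s(w, z)}) (Classical.decRel _) :=
  degDev_lt_addEdge_general hn G w z hwz hnadj hw hz
end

section
/- Let G be a connected irregular graph on n ≥ 3 vertices with m edges. Suppose e = uv is an edge with deg(u) ≤ 2m/n and deg(v) ≤ 2m/n, and w is a vertex with deg(w) > 2m/n not adjacent to u and distinct from u. Let G* = G − uv + uw. If G* is connected, then s(G*) = s(G) + 2; in particular s(G) < s(G*). -/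
open Finset

/-!
Rotating `uv` to `uw` keeps the number of edges, hence the mean degree `a = 2m/n`, and the degree
of the pivot `u`. Only two degrees change: `deg v` drops by one from a value `≤ a` and `deg w`
rises by one from a value `≥ a`. Both moves go away from `a`, so each adds exactly `1` to `s`.
-/
lemma sum_abs_sub_eq_add_two {ι : Type*} [Fintype ι] [DecidableEq ι] {d d' : ι → ℝ}
    {a : ℝ} {v w : ι} (hvw : v ≠ w) (hv : d v ≤ a) (hw : a ≤ d w) (hdv : d' v = d v - 1)
    (hdw : d' w = d w + 1) (hd : ∀ x, x ≠ v → x ≠ w → d' x = d x) :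
    ∑ x, |d' x - a| = ∑ x, |d x - a| + 2 := by
  have hterm : ∀ x,
      |d' x - a| = |d x - a| + ((if x = v then 1 else 0) + (if x = w then 1 else 0)) := by
    intro x
    by_cases hxv : x = v
    · subst hxv
      rw [hdv, abs_of_nonpos (by linarith), abs_of_nonpos (by linarith)]
      rw [if_pos rfl, if_neg hvw]; ring
    by_cases hxw : x = w
    · subst hxw
      rw [hdw, abs_of_nonneg (by linarith), abs_of_nonneg (by linarith)]
      rw [if_neg hxv, if_pos rfl]; ring
    rw [hd x hxv hxw, if_neg hxv, if_neg hxw, add_zero, add_zero]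
  simp only [hterm, sum_add_distrib, sum_ite_eq', mem_univ, if_true]
  norm_num

namespace SimpleGraph

variable {V : Type*}

def rotateEdge (G : SimpleGraph V) (u v w : V) : SimpleGraph V :=
  G.deleteEdges {s(u, v)} ⊔ edge u w

variable {G : SimpleGraph V} {u v w : V}

lemma rotateEdge_adj {x y : V} (huw : u ≠ w) :
    (G.rotateEdge u v w).Adj x y ↔ G.Adj x y ∧ s(x, y) ≠ s(u, v) ∨ s(x, y) = s(u, w) := by
  rw [rotateEdge, sup_adj, deleteEdges_adj, edge, fromEdgeSet_adj, Set.mem_singleton_iff,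
    Set.mem_singleton_iff]
  refine or_congr_right (and_iff_left_of_imp fun h hxy => huw ?_)
  simpa [hxy] using congrArg Sym2.IsDiag h

variable [Fintype V] [DecidableEq V] [DecidableRel G.Adj] [DecidableRel (G.rotateEdge u v w).Adj]

lemma card_edgeFinset_rotateEdge (hadj : G.Adj u v) (huw : u ≠ w) (hnadj : ¬G.Adj u w) :
    #(G.rotateEdge u v w).edgeFinset = #G.edgeFinset := by
  have hedges :
      (G.rotateEdge u v w).edgeFinset = insert s(u, w) (G.edgeFinset.erase s(u, v)) := by
    ext e
    rw [mem_edgeFinset, mem_insert, mem_erase, mem_edgeFinset]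
    simp [rotateEdge, edgeSet_edge_of_ne huw, and_comm]
  rw [hedges, card_insert_of_notMem (by simp [hnadj]), card_erase_of_mem (by simpa using hadj)]
  have := card_pos.2 ⟨s(u, v), G.mem_edgeFinset.2 hadj⟩
  omega

lemma degree_rotateEdge_old (hadj : G.Adj u v) (huw : u ≠ w) (hvw : v ≠ w) :
    (G.rotateEdge u v w).degree v + 1 = G.degree v := by
  have hN : (G.rotateEdge u v w).neighborFinset v = (G.neighborFinset v).erase u := by
    ext y
    rw [mem_neighborFinset, rotateEdge_adj huw, mem_erase, mem_neighborFinset]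
    have huv := hadj.ne
    grind [Sym2.eq_iff]
  rw [← card_neighborFinset_eq_degree, hN, card_erase_add_one (by simpa using hadj.symm)]
  rfl

lemma degree_rotateEdge_new (huw : u ≠ w) (hvw : v ≠ w) (hnadj : ¬G.Adj u w) :
    (G.rotateEdge u v w).degree w = G.degree w + 1 := by
  have hN : (G.rotateEdge u v w).neighborFinset w = insert u (G.neighborFinset w) := by
    ext y
    rw [mem_neighborFinset, rotateEdge_adj huw, mem_insert, mem_neighborFinset]
    grind [Sym2.eq_iff]
  rw [← card_neighborFinset_eq_degree, hN,
    card_insert_of_notMem (by simpa using fun h => hnadj h.symm)]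
  rfl

lemma degree_rotateEdge_pivot (hadj : G.Adj u v) (huw : u ≠ w) (hnadj : ¬G.Adj u w) :
    (G.rotateEdge u v w).degree u = G.degree u := by
  have hN : (G.rotateEdge u v w).neighborFinset u = insert w ((G.neighborFinset u).erase v) := by
    ext y
    rw [mem_neighborFinset, rotateEdge_adj huw, mem_insert, mem_erase, mem_neighborFinset]
    grind [Sym2.eq_iff]
  rw [← card_neighborFinset_eq_degree, hN, card_insert_of_notMem (by simp [hnadj]),
    card_erase_add_one (by simpa using hadj)]
  rfl

lemma degree_rotateEdge_of_ne {x : V} (hadj : G.Adj u v) (huw : u ≠ w) (hnadj : ¬G.Adj u w)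
    (hxv : x ≠ v) (hxw : x ≠ w) : (G.rotateEdge u v w).degree x = G.degree x := by
  obtain rfl | hxu := eq_or_ne x u
  · exact degree_rotateEdge_pivot hadj huw hnadj
  have hN : (G.rotateEdge u v w).neighborFinset x = G.neighborFinset x := by
    ext y
    rw [mem_neighborFinset, rotateEdge_adj huw, mem_neighborFinset]
    have huv := hadj.ne
    grind [Sym2.eq_iff]
  rw [← card_neighborFinset_eq_degree, hN]
  rfl

end SimpleGraph

open SimpleGraph in
theorem degDev_rotateEdge_eq_add_two {V : Type*} [Fintype V] [DecidableEq V] {G : SimpleGraph V}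
    [DecidableRel G.Adj] {u v w : V} [DecidableRel (G.rotateEdge u v w).Adj]
    (hadj : G.Adj u v) (huw : u ≠ w) (hnadj : ¬G.Adj u w)
    (hv : (G.degree v : ℝ) ≤ 2 * #G.edgeFinset / Fintype.card V)
    (hw : 2 * #G.edgeFinset / Fintype.card V ≤ (G.degree w : ℝ)) :
    degDev (G.rotateEdge u v w) = degDev G + 2 := by
  have hvw : v ≠ w := by rintro rfl; exact hnadj hadj
  rw [degDev, degDev, card_edgeFinset_rotateEdge hadj huw hnadj]
  refine sum_abs_sub_eq_add_two hvw hv hw ?_ ?_ fun x hxv hxw => ?_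
  · rw [← degree_rotateEdge_old hadj huw hvw]; push_cast; ring
  · rw [degree_rotateEdge_new huw hvw hnadj]; push_cast; ring
  · rw [degree_rotateEdge_of_ne hadj huw hnadj hxv hxw]

theorem degDev_rotateEdge_general {n : ℕ} (G : SimpleGraph (Fin n))
    [DecidableRel G.Adj]
    (u v w : Fin n) (hadj : G.Adj u v)
    (hv : (G.degree v : ℝ) ≤ 2 * G.edgeFinset.card / n)
    (hw : 2 * G.edgeFinset.card / n < (G.degree w : ℝ))
    (huw : u ≠ w) (hnadj : ¬ G.Adj u w) :
    @degDev _ _ _ (G.deleteEdges {s(u, v)} ⊔ SimpleGraph.fromEdgeSet {s(u, w)})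
        (Classical.decRel _) = degDev G + 2 ∧
    degDev G < @degDev _ _ _ (G.deleteEdges {s(u, v)} ⊔ SimpleGraph.fromEdgeSet {s(u, w)})
        (Classical.decRel _) := by
  let _ : DecidableRel (G.rotateEdge u v w).Adj := Classical.decRel _
  have h : degDev (G.rotateEdge u v w) = degDev G + 2 :=
    degDev_rotateEdge_eq_add_two hadj huw hnadj (by rwa [Fintype.card_fin])
      (by rw [Fintype.card_fin]; exact hw.le)
  exact ⟨h, (lt_add_of_pos_right _ two_pos).trans_eq h.symm⟩

theorem degDev_rotateEdge {n : ℕ} (hn : 3 ≤ n) (G : SimpleGraph (Fin n))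
    [DecidableRel G.Adj] (hconn : G.Connected)
    (hirr : ∃ u v, G.degree u ≠ G.degree v)
    (u v w : Fin n) (hadj : G.Adj u v)
    (hu : (G.degree u : ℝ) ≤ 2 * G.edgeFinset.card / n)
    (hv : (G.degree v : ℝ) ≤ 2 * G.edgeFinset.card / n)
    (hw : 2 * G.edgeFinset.card / n < (G.degree w : ℝ))
    (huw : u ≠ w) (hnadj : ¬ G.Adj u w)
    (hconn' : (G.deleteEdges {s(u, v)} ⊔ SimpleGraph.fromEdgeSet {s(u, w)}).Connected) :
    @degDev _ _ _ (G.deleteEdges {s(u, v)} ⊔ SimpleGraph.fromEdgeSet {s(u, w)})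
        (Classical.decRel _) = degDev G + 2 ∧
    degDev G < @degDev _ _ _ (G.deleteEdges {s(u, v)} ⊔ SimpleGraph.fromEdgeSet {s(u, w)})
        (Classical.decRel _) :=
  degDev_rotateEdge_general G u v w hadj hv hw huw hnadj
end

section
/- For every connected graph G on n vertices, s(G) ≤ s(CS(n,k)), where k = n/3 if 3 | n, k = (n−1)/3 if 3 | n−1, and k = (n−2)/3 (equivalently (n+1)/3) if 3 | n−2; that is, the maximum of the degree deviation measure over all connected n-vertex graphs is attained by a complete split graph with clique of size roughly n/3. -/
open Finset

/-- The complete split graph `CS(n,k)`. -/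
def CS (n k : ℕ) : SimpleGraph (Fin n) where
  Adj u v := u ≠ v ∧ (u.val < k ∨ v.val < k)
  symm := ⟨fun _ _ ⟨h1, h2⟩ => ⟨h1.symm, h2.symm⟩⟩
  loopless := ⟨fun _ ⟨h1, _⟩ => absurd rfl h1⟩

instance (n k : ℕ) : DecidableRel (CS n k).Adj := fun u v =>
  inferInstanceAs (Decidable (u ≠ v ∧ (u.val < k ∨ v.val < k)))

lemma Pbound (n k u : ℤ) (hn : n = 3*k ∨ n = 3*k+1 ∨ n = 3*k+2)
    (hk : 0 ≤ k) (hu : 0 ≤ u) (h2u : 2*u ≤ n) :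
    u*(n-u)*(n-u-1) ≤ k*(n-k)*(n-k-1) := by
  rcases lt_trichotomy u k with h | rfl | h
  · have ha : 0 ≤ k - 1 - u := by omega
    rcases hn with rfl | rfl | rfl <;>
      nlinarith [mul_nonneg ha ha, mul_nonneg (mul_nonneg ha ha) ha,
        mul_nonneg hk ha, mul_nonneg hk (mul_nonneg ha ha), mul_nonneg hk hu,
        mul_nonneg hu ha]
  · exact le_refl _
  · have hb : 0 ≤ u - k - 1 := by omega
    have hc : 0 ≤ k - 2*(u - k - 1) - 2 + (n - 3*k) := by omega
    rcases hn with rfl | rfl | rfl <;>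
      nlinarith [mul_nonneg hb hb, mul_nonneg (mul_nonneg hb hb) hb,
        mul_nonneg hb hc, mul_nonneg (mul_nonneg hb hb) hc, mul_nonneg hk hb,
        mul_nonneg hk (mul_nonneg hb hb)]

lemma Rbound (n k u : ℤ) (hn : n = 3*k ∨ n = 3*k+1 ∨ n = 3*k+2)
    (hk : 0 ≤ k) (hun : u ≤ n) (h2u : n ≤ 2*u) :
    (n-u)*(u*u-3*u+n) ≤ k*(n-k)*(n-k-1) := by
  obtain ⟨w, rfl⟩ : ∃ w, u = n - w := ⟨n-u, by omega⟩
  have hw : 0 ≤ w := by omega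
  have h2w : 2*w ≤ n := by omega
  by_cases h4 : w + 3 ≤ 4*k
  · have h4' : 0 ≤ 4*k - w - 3 := by omega
    rcases hn with rfl | rfl | rfl <;>
      nlinarith [mul_nonneg (sq_nonneg (k-w)) h4', sq_nonneg (2*w-3*k),
        sq_nonneg k, hw, hk, mul_nonneg hk hw]
  · have hk1 : k ≤ 1 := by omega
    have hw2 : w ≤ 2 := by omega
    interval_cases k <;> interval_cases w <;> rcases hn with rfl | rfl | rfl <;> nlinarith [hk]

lemma arith (n k u S m : ℤ) (hn : n = 3*k ∨ n = 3*k+1 ∨ n = 3*k+2)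
    (hk : 0 ≤ k) (hu : 0 ≤ u) (hun : u ≤ n)
    (h1 : S ≤ u*(n-1)) (h2 : 2*S ≤ 2*m + u*(u-1)) (h3 : S + (n-u) ≤ 2*m) :
    n*S - 2*m*u ≤ k*(n-k)*(n-k-1) := by
  rcases le_or_gt (2*u) n with hc | hc
  · have hP := Pbound n k u hn hk hu hc
    nlinarith [mul_nonneg hu (by linarith : (0:ℤ) ≤ 2*m + u*(u-1) - 2*S),
      mul_nonneg (by linarith : (0:ℤ) ≤ n - 2*u) (by linarith : (0:ℤ) ≤ u*(n-1) - S)]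
  · have hR := Rbound n k u hn hk hun (by linarith)
    nlinarith [mul_nonneg (by linarith : (0:ℤ) ≤ n - u) (by linarith : (0:ℤ) ≤ 2*m + u*(u-1) - 2*S),
      mul_nonneg (by linarith : (0:ℤ) ≤ 2*u - n) (by linarith : (0:ℤ) ≤ 2*m - S - (n-u))]


set_option maxHeartbeats 1000000 in
lemma core {n : ℕ} (hn2 : 2 ≤ n) (G : SimpleGraph (Fin n)) [DecidableRel G.Adj]
    (hconn : G.Connected) (k : ℕ)
    (hn : (n:ℤ) = 3*k ∨ (n:ℤ) = 3*k+1 ∨ (n:ℤ) = 3*k+2) :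
    degDev G ≤ 2*k*((n:ℝ)-k)*((n:ℝ)-k-1)/n := by
  classical
  have hnR : (0:ℝ) < n := by exact_mod_cast Nat.pos_of_ne_zero (by omega)
  set m := G.edgeFinset.card with hm
  have hds : ∑ v, G.degree v = 2 * m := G.sum_degrees_eq_twice_card_edges
  set d : ℝ := 2 * m / n with hd
  set p : Fin n → Prop := fun v => 2*m < n * G.degree v with hp
  set U : Finset (Fin n) := univ.filter p with hU
  set u := U.card with hu
  set S := ∑ v ∈ U, G.degree v with hSdef
  have hposU : ∀ v ∈ U, |(G.degree v : ℝ) - d| = (G.degree v : ℝ) - d := by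
    intro v hv
    rw [hU, mem_filter] at hv
    have h2 : (2*m : ℝ) < n * G.degree v := by exact_mod_cast hv.2
    have : d < (G.degree v : ℝ) := by
      rw [hd, div_lt_iff₀ hnR]; nlinarith
    exact abs_of_pos (by linarith)
  have hnegC : ∀ v ∈ univ.filter (fun v => ¬ p v),
      |(G.degree v : ℝ) - d| = -((G.degree v : ℝ) - d) := by
    intro v hv
    rw [mem_filter] at hv
    have h2' : n * G.degree v ≤ 2*m := Nat.le_of_not_lt hv.2
    have h2 : ((n:ℝ) * G.degree v) ≤ 2*m := by exact_mod_cast h2'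
    have : (G.degree v : ℝ) ≤ d := by
      rw [hd, le_div_iff₀ hnR]; nlinarith
    exact abs_of_nonpos (by linarith)
  have htot : ∑ v, ((G.degree v : ℝ) - d) = 0 := by
    rw [Finset.sum_sub_distrib, Finset.sum_const, Finset.card_univ, Fintype.card_fin]
    have : (∑ v, ((G.degree v : ℝ))) = 2*m := by exact_mod_cast hds
    rw [this, hd, nsmul_eq_mul]
    field_simp
    simp
  have e4 : degDev G = ∑ v, |(G.degree v : ℝ) - d| := by
    rw [degDev]
    simp only [Fintype.card_fin]
    rfl
  have e3 : ∑ v ∈ U, ((G.degree v : ℝ) - d) = (S : ℝ) - u * d := by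
    rw [Finset.sum_sub_distrib, Finset.sum_const, hSdef]
    push_cast
    ring_nf
    rfl
  have e5 : ∑ v ∈ U, ((G.degree v : ℝ) - d)
      + ∑ v ∈ univ.filter (fun v => ¬ p v), ((G.degree v : ℝ) - d) = 0 := by
    rw [hU, Finset.sum_filter_add_sum_filter_not]
    exact htot
  have hdd : degDev G = 2 * ((S : ℝ) - u * d) := by
    rw [e4, ← Finset.sum_filter_add_sum_filter_not univ p, ← hU]
    rw [Finset.sum_congr rfl hposU, Finset.sum_congr rfl hnegC]
    rw [Finset.sum_neg_distrib]
    linarith [e3, e5]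
  have hun : u ≤ n := by
    rw [hu, hU]
    calc (univ.filter p).card ≤ (univ : Finset (Fin n)).card := Finset.card_filter_le _ _
    _ = n := by rw [card_univ, Fintype.card_fin]
  have hdle : ∀ v : Fin n, G.degree v ≤ n - 1 := by
    intro v
    have := G.degree_lt_card_verts v
    rw [Fintype.card_fin] at this
    omega
  have h1 : S ≤ u * (n-1) := by
    calc S ≤ u • (n-1) := Finset.sum_le_card_nsmul U _ _ (fun v _ => hdle v)
    _ = u * (n-1) := by rw [smul_eq_mul]
  have hUC : u + (univ.filter (fun v => ¬ p v)).card = n := by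
    rw [hu, hU, Finset.card_filter_add_card_filter_not, card_univ, Fintype.card_fin]
  have hSC : S + ∑ v ∈ univ.filter (fun v => ¬ p v), G.degree v = 2 * m := by
    rw [hSdef, hU, Finset.sum_filter_add_sum_filter_not, hds]
  have hdegpos : ∀ v : Fin n, 1 ≤ G.degree v := by
    intro v
    obtain ⟨w, hw⟩ := Fintype.exists_ne_of_one_lt_card (by rw [Fintype.card_fin]; omega) v
    have hreach : G.Reachable v w := hconn.preconnected v w
    have hpw := hreach.some
    have hnil : ¬ hpw.Nil := SimpleGraph.Walk.not_nil_of_ne (hw.symm)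
    exact (G.degree_pos_iff_exists_adj v).2 ⟨_, hpw.adj_snd hnil⟩
  have h3 : S + (n - u) ≤ 2 * m := by
    have hcs : (univ.filter (fun v => ¬ p v)).card • 1 ≤
        ∑ v ∈ univ.filter (fun v => ¬ p v), G.degree v :=
      Finset.card_nsmul_le_sum _ _ 1 (fun v _ => hdegpos v)
    simp only [smul_eq_mul, mul_one] at hcs
    omega
  have h2 : 2*S + u ≤ 2*m + u*u := by
    have hsplitdeg : ∀ v ∈ U, G.degree v =
        (G.neighborFinset v ∩ U).card + (G.neighborFinset v \ U).card := by
      intro v _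
      rw [SimpleGraph.degree]
      exact (Finset.card_inter_add_card_sdiff _ _).symm
    have hinter : ∀ v ∈ U, (G.neighborFinset v ∩ U).card ≤ u - 1 := by
      intro v hv
      have hsub : G.neighborFinset v ∩ U ⊆ U.erase v := by
        intro w hw
        rw [Finset.mem_inter] at hw
        exact Finset.mem_erase.2 ⟨(G.mem_neighborFinset v w |>.1 hw.1).ne', hw.2⟩
      calc (G.neighborFinset v ∩ U).card ≤ (U.erase v).card := Finset.card_le_card hsub
      _ = u - 1 := by rw [Finset.card_erase_of_mem hv, hu]
    have hTle : ∑ v ∈ U, (G.neighborFinset v \ U).card ≤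
        ∑ w ∈ univ.filter (fun v => ¬ p v), G.degree w := by
      have hrw : ∀ v : Fin n, G.neighborFinset v \ U =
          (univ.filter (fun w => ¬ p w)).filter (fun w => G.Adj v w) := by
        intro v
        ext w
        simp only [Finset.mem_sdiff, SimpleGraph.mem_neighborFinset, Finset.mem_filter,
          Finset.mem_univ, true_and, hU]
        tauto
      calc ∑ v ∈ U, (G.neighborFinset v \ U).card
          = ∑ v ∈ U, ∑ w ∈ univ.filter (fun w => ¬ p w), (if G.Adj v w then 1 else 0) := by
            simp_rw [hrw, Finset.card_filter]
        _ = ∑ w ∈ univ.filter (fun w => ¬ p w), ∑ v ∈ U, (if G.Adj v w then 1 else 0) :=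
            Finset.sum_comm
        _ ≤ ∑ w ∈ univ.filter (fun w => ¬ p w), G.degree w := by
            apply Finset.sum_le_sum
            intro w _
            rw [← Finset.card_filter]
            apply Finset.card_le_card
            intro v hv
            rw [Finset.mem_filter] at hv
            exact (G.mem_neighborFinset w v).2 hv.2.symm
    have hS1 : S ≤ u * (u-1) + ∑ v ∈ U, (G.neighborFinset v \ U).card := by
      calc S = ∑ v ∈ U, ((G.neighborFinset v ∩ U).card + (G.neighborFinset v \ U).card) :=
          Finset.sum_congr rfl hsplitdeg
      _ = (∑ v ∈ U, (G.neighborFinset v ∩ U).card) + ∑ v ∈ U, (G.neighborFinset v \ U).card :=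
          Finset.sum_add_distrib
      _ ≤ u * (u-1) + ∑ v ∈ U, (G.neighborFinset v \ U).card := by
          have hle : (∑ v ∈ U, (G.neighborFinset v ∩ U).card) ≤ u • (u-1) :=
            Finset.sum_le_card_nsmul U _ _ hinter
          rw [smul_eq_mul] at hle
          exact Nat.add_le_add_right hle _
    have hmul : u * (u-1) + u = u * u := by
      rcases Nat.eq_zero_or_pos u with h0 | hpos
      · rw [h0]
      · have h' : u - 1 + 1 = u := Nat.succ_pred_eq_of_pos hpos
        calc u*(u-1) + u = u*((u-1)+1) := by ring
        _ = u*u := by rw [h']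
    have hT2 : (∑ v ∈ U, (G.neighborFinset v \ U).card) + S ≤ 2*m := by
      have := hTle
      omega
    linarith [hS1, hT2, hmul]
  have hZ := arith (n:ℤ) (k:ℤ) (u:ℤ) (S:ℤ) (m:ℤ) hn (Int.natCast_nonneg k)
    (Int.natCast_nonneg u)
    (by exact_mod_cast hun)
    (by have h1' := h1; zify [show 1 ≤ n by omega] at h1'; exact h1')
    (by have h2' := h2; zify at h2'; linarith)
    (by have h3' := h3; zify [hun] at h3'; linarith)
  have hZR : (n:ℝ)*S - 2*m*u ≤ (k:ℝ)*((n:ℝ)-k)*((n:ℝ)-k-1) := by exact_mod_cast hZ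
  rw [hdd, hd]
  rw [show (2:ℝ)*((S:ℝ) - u * (2*m/n)) = 2*((n:ℝ)*S - 2*m*u)/n by field_simp]
  rw [div_le_div_iff₀ hnR hnR]
  nlinarith [hZR, hnR]

lemma card_val_lt (n k : ℕ) (hk : k ≤ n) :
    ((univ : Finset (Fin n)).filter (fun w => w.val < k)).card = k := by
  rcases eq_or_lt_of_le hk with heq | h
  · subst heq
    have he : (univ : Finset (Fin k)).filter (fun w => w.val < k) = univ := by
      apply Finset.filter_true_of_mem
      intro w _
      exact w.isLt
    rw [he, card_univ, Fintype.card_fin]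
  · have he : (univ : Finset (Fin n)).filter (fun w => w.val < k) = Finset.Iio ⟨k, h⟩ := by
      ext w
      simp [Finset.mem_Iio, Fin.lt_def]
    rw [he, Fin.card_Iio]

lemma degDev_CS (n k : ℕ) (hn : 0 < n) (hkn : k < n ∨ k = 0) :
    degDev (CS n k) = 2*k*((n:ℝ)-k)*((n:ℝ)-k-1)/n := by
  have hk : k ≤ n := by omega
  have hnR : (0:ℝ) < n := by exact_mod_cast hn
  have hdeg : ∀ v : Fin n, (CS n k).degree v = if v.val < k then n-1 else k := by
    intro v
    by_cases hv : v.val < k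
    · have hN : (CS n k).neighborFinset v = univ.erase v := by
        ext w
        rw [SimpleGraph.mem_neighborFinset, Finset.mem_erase]
        show (v ≠ w ∧ (v.val < k ∨ w.val < k)) ↔ _
        constructor
        · rintro ⟨hne, -⟩
          exact ⟨hne.symm, Finset.mem_univ w⟩
        · rintro ⟨hne, -⟩
          exact ⟨hne.symm, Or.inl hv⟩
      rw [SimpleGraph.degree, hN, Finset.card_erase_of_mem (Finset.mem_univ v),
        card_univ, Fintype.card_fin, if_pos hv]
    · have hN : (CS n k).neighborFinset v = univ.filter (fun w => w.val < k) := by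
        ext w
        rw [SimpleGraph.mem_neighborFinset, Finset.mem_filter]
        show (v ≠ w ∧ (v.val < k ∨ w.val < k)) ↔ _
        constructor
        · rintro ⟨hne, hor⟩
          exact ⟨Finset.mem_univ w, hor.resolve_left hv⟩
        · rintro ⟨-, hwk⟩
          refine ⟨?_, Or.inr hwk⟩
          intro he
          exact hv (by rw [he]; exact hwk)
      rw [SimpleGraph.degree, hN, card_val_lt n k hk, if_neg hv]
  have hcounts : ((univ : Finset (Fin n)).filter (fun v => v.val < k)).card = k :=
    card_val_lt n k hk
  have hcounts2 : ((univ : Finset (Fin n)).filter (fun v => ¬ v.val < k)).card = n - k := by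
    have h := Finset.card_filter_add_card_filter_not
      (s := (univ : Finset (Fin n))) (p := fun v => v.val < k)
    rw [card_univ, Fintype.card_fin, hcounts] at h
    omega
  have e1 : ∀ v ∈ (univ : Finset (Fin n)).filter (fun v => v.val < k),
      (CS n k).degree v = n-1 := by
    intro v hv
    rw [hdeg v, if_pos (Finset.mem_filter.1 hv).2]
  have e2 : ∀ v ∈ (univ : Finset (Fin n)).filter (fun v => ¬ v.val < k),
      (CS n k).degree v = k := by
    intro v hv
    rw [hdeg v, if_neg (Finset.mem_filter.1 hv).2]
  have hsum : ∑ v, (CS n k).degree v = k * (n-1) + (n-k) * k := by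
    rw [← Finset.sum_filter_add_sum_filter_not univ (fun v : Fin n => v.val < k),
      Finset.sum_congr rfl e1, Finset.sum_congr rfl e2, Finset.sum_const, Finset.sum_const,
      hcounts, hcounts2, smul_eq_mul, smul_eq_mul]
  have hm : 2 * (CS n k).edgeFinset.card = k*(n-1) + (n-k)*k := by
    rw [← SimpleGraph.sum_degrees_eq_twice_card_edges, hsum]
  set c : ℝ := 2 * (CS n k).edgeFinset.card / n with hc
  have hcR : c * n = k*((n:ℝ)-1) + ((n:ℝ)-k)*k := by
    rw [hc, div_mul_cancel₀ _ (ne_of_gt hnR)]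
    have : ((2 * (CS n k).edgeFinset.card : ℕ) : ℝ) = ((k*(n-1) + (n-k)*k : ℕ) : ℝ) := by
      exact_mod_cast congrArg (fun x : ℕ => (x:ℝ)) hm
    push_cast [Nat.cast_sub hk, Nat.cast_sub (show 1 ≤ n by omega)] at this
    linarith [this]
  have habs1 : ∀ v ∈ (univ : Finset (Fin n)).filter (fun v => v.val < k),
      |((CS n k).degree v : ℝ) - c| = ((n:ℝ) - 1) - c := by
    intro v hv
    have hvk := (Finset.mem_filter.1 hv).2
    have hk1 : 1 ≤ k := by omega
    have hklt : k < n := by omega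
    have hknR : (k:ℝ) + 1 ≤ n := by exact_mod_cast hklt
    have hprod : (0:ℝ) ≤ ((n:ℝ)-k)*((n:ℝ)-1-k) := by nlinarith
    have hge : (0:ℝ) ≤ ((n:ℝ) - 1) - c := by nlinarith [hcR, hnR]
    rw [e1 v hv]
    rw [Nat.cast_sub (show 1 ≤ n by omega)]
    push_cast
    exact abs_of_nonneg hge
  have habs2 : ∀ v ∈ (univ : Finset (Fin n)).filter (fun v => ¬ v.val < k),
      |((CS n k).degree v : ℝ) - c| = c - k := by
    intro v hv
    have hprod : (0:ℝ) ≤ (k:ℝ)*((n:ℝ)-k-1) := by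
      rcases hkn with h | h
      · have : (k:ℝ) + 1 ≤ n := by exact_mod_cast h
        have : (0:ℝ) ≤ (k:ℝ) := by positivity
        nlinarith
      · rw [h]; norm_num
    have hle : ((k:ℝ)) - c ≤ 0 := by nlinarith [hcR, hnR]
    rw [e2 v hv]
    rw [abs_sub_comm]
    exact abs_of_nonneg (by linarith)
  have hdd : degDev (CS n k) = k * (((n:ℝ)-1) - c) + ((n:ℝ)-k) * (c - k) := by
    rw [degDev]
    simp only [Fintype.card_fin]
    rw [← Finset.sum_filter_add_sum_filter_not univ (fun v : Fin n => v.val < k),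
      Finset.sum_congr rfl habs1, Finset.sum_congr rfl habs2, Finset.sum_const,
      Finset.sum_const, hcounts, hcounts2, nsmul_eq_mul, nsmul_eq_mul,
      Nat.cast_sub hk]
  rw [hdd, eq_div_iff (ne_of_gt hnR)]
  linear_combination ((n:ℝ) - 2*(k:ℝ)) * hcR

lemma degDev_nonneg {V : Type*} [Fintype V] [DecidableEq V]
    (G : SimpleGraph V) [DecidableRel G.Adj] : 0 ≤ degDev G :=
  Finset.sum_nonneg fun _ _ => abs_nonneg _

lemma degDev_small {n : ℕ} (hn : n ≤ 1) (G : SimpleGraph (Fin n)) [DecidableRel G.Adj] :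
    degDev G = 0 := by
  have hdeg : ∀ v : Fin n, G.degree v = 0 := by
    intro v
    have := G.degree_lt_card_verts v
    rw [Fintype.card_fin] at this
    omega
  have hs : ∑ v, G.degree v = 0 := by simp [hdeg]
  have hm : G.edgeFinset.card = 0 := by
    have h2 := G.sum_degrees_eq_twice_card_edges
    omega
  simp [degDev, hdeg, hm]

lemma bridge {n : ℕ} (G : SimpleGraph (Fin n)) [DecidableRel G.Adj]
    (hconn : G.Connected) (k : ℕ) (hnk : (n:ℤ) = 3*k ∨ (n:ℤ) = 3*k+1 ∨ (n:ℤ) = 3*k+2)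
    (hkn : k < n ∨ k = 0) (hn : 0 < n) :
    degDev G ≤ degDev (CS n k) := by
  rcases le_or_gt 2 n with h2 | h2
  · calc degDev G ≤ 2*k*((n:ℝ)-k)*((n:ℝ)-k-1)/n := core h2 G hconn k hnk
    _ = degDev (CS n k) := (degDev_CS n k hn hkn).symm
  · have hn1 : n = 1 := by omega
    rw [degDev_small (by omega) G]
    exact degDev_nonneg _

theorem degDev_le_CS {n : ℕ} (G : SimpleGraph (Fin n)) [DecidableRel G.Adj]
    (hconn : G.Connected) :
    (3 ∣ n → degDev G ≤ degDev (CS n (n / 3))) ∧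
    (3 ∣ n - 1 ∧ ¬ 3 ∣ n → degDev G ≤ degDev (CS n ((n - 1) / 3))) ∧
    (3 ∣ n - 2 ∧ ¬ 3 ∣ n ∧ ¬ 3 ∣ n - 1 →
      degDev G ≤ degDev (CS n ((n - 2) / 3)) ∧
      degDev (CS n ((n - 2) / 3)) = degDev (CS n ((n + 1) / 3))) := by
  refine ⟨?_, ?_, ?_⟩
  · intro h3
    rcases Nat.eq_zero_or_pos n with rfl | hn
    · rw [degDev_small (by omega) G]
      exact degDev_nonneg _
    · exact bridge G hconn (n/3) (Or.inl (by omega)) (by omega) hn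
  · rintro ⟨h3, hnd⟩
    have hn : 0 < n := by omega
    exact bridge G hconn ((n-1)/3) (Or.inr (Or.inl (by omega))) (by omega) hn
  · rintro ⟨h3, hnd, hnd1⟩
    have hn : 2 ≤ n := by omega
    have hk : n = 3 * ((n-2)/3) + 2 := by omega
    constructor
    · exact bridge G hconn ((n-2)/3) (Or.inr (Or.inr (by omega))) (by omega) (by omega)
    · set k := (n-2)/3 with hkdef
      have hk1 : (n+1)/3 = k + 1 := by omega
      have hknR : (n:ℝ) = 3*k+2 := by exact_mod_cast congrArg (fun x : ℕ => (x:ℝ)) hk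
      rw [degDev_CS n k (by omega) (by omega), hk1,
        degDev_CS n (k+1) (by omega) (by omega), hknR]
      push_cast
      ring
end

section
/- Let T be a chemical tree (a tree with maximum degree ≤ 4) on n ≥ 2 vertices, and let n_i(T) denote the number of vertices of degree i. Then s(T) = 4(n−2)/n + ((n−2)/n)·(2n₃(T) + 4n₄(T)). -/
open Finset

/-- The number of vertices of degree `i` in `G`. -/
def degCount {V : Type*} [Fintype V] [DecidableEq V]
    (G : SimpleGraph V) [DecidableRel G.Adj] (i : ℕ) : ℕ :=
  (Finset.univ.filter (fun v => G.degree v = i)).card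

theorem degDev_chemical_tree {n : ℕ} (hn : 2 ≤ n) (T : SimpleGraph (Fin n))
    [DecidableRel T.Adj] (htree : T.IsTree) (hdeg : ∀ v, T.degree v ≤ 4) :
    degDev T = 4 * ((n : ℝ) - 2) / n +
      ((n : ℝ) - 2) / n * (2 * degCount T 3 + 4 * degCount T 4) := by
  classical
  have hn0 : (0:ℝ) < n := by
    have : (2:ℝ) ≤ n := by exact_mod_cast hn
    linarith
  have hne : (n:ℝ) ≠ 0 := ne_of_gt hn0
  have h2n : (2:ℝ) ≤ n := by exact_mod_cast hn
  have hcard : Fintype.card (Fin n) = n := Fintype.card_fin n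
  have hm : T.edgeFinset.card + 1 = n := by
    have h := htree.card_edgeFinset; rw [hcard] at h; exact h
  have hmR : (T.edgeFinset.card : ℝ) = (n : ℝ) - 1 := by
    have := congrArg (Nat.cast : ℕ → ℝ) hm
    push_cast at this; linarith
  -- every vertex has degree ≥ 1
  have hdpos : ∀ v : Fin n, 1 ≤ T.degree v := by
    intro v
    have hcard2 : 1 < Fintype.card (Fin n) := by omega
    obtain ⟨w, hw⟩ := Fintype.exists_ne_of_one_lt_card hcard2 v
    obtain ⟨p⟩ := htree.isConnected.preconnected v w
    rw [Nat.succ_le_iff, T.degree_pos_iff_exists_adj]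
    cases p with
    | nil => exact absurd rfl hw.symm
    | cons h q => exact ⟨_, h⟩
  have hmaps : ∀ v ∈ (univ : Finset (Fin n)), T.degree v ∈ Finset.Icc 1 4 :=
    fun v _ => Finset.mem_Icc.mpr ⟨hdpos v, hdeg v⟩
  set c : ℝ := 2 * T.edgeFinset.card / (Fintype.card (Fin n)) with hc
  have hcval : c = 2 * ((n:ℝ) - 1) / n := by rw [hc, hmR, hcard]
  -- fiberwise decomposition of the degDev sum
  have hsum : degDev T = ∑ i ∈ Finset.Icc 1 4, (degCount T i : ℝ) * |(i:ℝ) - c| := by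
    rw [degDev, ← Finset.sum_fiberwise_of_maps_to hmaps]
    refine Finset.sum_congr rfl fun i _ => ?_
    rw [Finset.sum_congr rfl (fun v hv => by
      rw [(Finset.mem_filter.mp hv).2]), Finset.sum_const, degCount, nsmul_eq_mul]
  -- count identities
  have hA : ∑ i ∈ Finset.Icc 1 4, degCount T i = n := by
    have := Finset.card_eq_sum_card_fiberwise hmaps
    simpa [degCount, hcard] using this.symm
  have hB : ∑ i ∈ Finset.Icc 1 4, i * degCount T i = 2 * (n - 1) := by
    have h1 : ∑ v : Fin n, T.degree v = 2 * T.edgeFinset.card :=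
      T.sum_degrees_eq_twice_card_edges
    rw [← Finset.sum_fiberwise_of_maps_to hmaps (fun v => T.degree v)] at h1
    have h2 : ∀ i ∈ Finset.Icc 1 4,
        ∑ v ∈ univ.filter (fun v => T.degree v = i), T.degree v = i * degCount T i := by
      intro i _
      rw [Finset.sum_congr rfl (fun v hv => (Finset.mem_filter.mp hv).2),
        Finset.sum_const, degCount, smul_eq_mul, mul_comm]
    rw [Finset.sum_congr rfl h2] at h1
    omega
  -- expand Icc 1 4
  have hIcc : Finset.Icc 1 4 = ({1, 2, 3, 4} : Finset ℕ) := by decide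
  rw [hIcc] at hsum hA hB
  norm_num [Finset.sum_insert, Finset.mem_insert, Finset.mem_singleton,
    Finset.sum_singleton] at hsum hA hB
  -- evaluate absolute values
  have hc1 : |(1:ℝ) - c| = c - 1 := by
    rw [abs_of_nonpos] <;> [ring; skip]
    rw [hcval]; rw [sub_nonpos, le_div_iff₀ hn0]; linarith
  have hc2 : |(2:ℝ) - c| = 2 - c := by
    rw [abs_of_nonneg]
    rw [hcval, sub_nonneg, div_le_iff₀ hn0]; linarith
  have hc3 : |(3:ℝ) - c| = 3 - c := by
    rw [abs_of_nonneg]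
    rw [hcval, sub_nonneg, div_le_iff₀ hn0]; linarith
  have hc4 : |(4:ℝ) - c| = 4 - c := by
    rw [abs_of_nonneg]
    rw [hcval, sub_nonneg, div_le_iff₀ hn0]; linarith
  rw [hsum, hc1, hc2, hc3, hc4, hcval]
  have hAr : (degCount T 1 : ℝ) + degCount T 2 + degCount T 3 + degCount T 4 = n := by
    have h := congrArg (Nat.cast : ℕ → ℝ) hA; push_cast at h; linarith
  have hB' : degCount T 1 + (2 * degCount T 2 + (3 * degCount T 3 + 4 * degCount T 4)) + 2
      = 2 * n := by omega
  have hBr : (degCount T 1 : ℝ) + 2 * degCount T 2 + 3 * degCount T 3 + 4 * degCount T 4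
      = 2 * (n:ℝ) - 2 := by
    have h := congrArg (Nat.cast : ℕ → ℝ) hB'; push_cast at h; linarith
  have h1 : (degCount T 1 : ℝ) = 2 + degCount T 3 + 2 * degCount T 4 := by linarith
  have h2 : (degCount T 2 : ℝ) = (n:ℝ) - 2 - 2 * degCount T 3 - 3 * degCount T 4 := by
    linarith
  rw [h1, h2]
  field_simp
  ring
end

section
/- Let G be a connected chemical graph with n vertices and cyclomatic number c ≥ 2, where c = m − n + 1. If n > 2c − 2, then s(G) = (1/n)·[(2n − 4c + 4)·n₃(G) + (4n − 4c + 4)·n₄(G)]. -/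
open Finset

/- Since `n > 2c - 2` and `c ≥ 2`, the average degree `a = 2(n + c - 1)/n` lies in `[2, 3]`, so
exactly the vertices of degree 3 and 4 lie above it. Deviations from the mean sum to zero, hence
the total absolute deviation is twice the excess of those vertices: `2(n₃(3 - a) + n₄(4 - a))`. -/

theorem sum_abs_sub_eq_two_mul_sum_filter {ι : Type*} (s : Finset ι) (f : ι → ℝ) (a : ℝ)
    (p : ι → Prop) [DecidablePred p] (hmean : ∑ i ∈ s, (f i - a) = 0)
    (hp : ∀ i ∈ s, p i → a ≤ f i) (hnp : ∀ i ∈ s, ¬ p i → f i ≤ a) :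
    ∑ i ∈ s, |f i - a| = 2 * ∑ i ∈ s with p i, (f i - a) := by
  have habs : ∀ i ∈ s, |f i - a| = if p i then f i - a else -(f i - a) := by
    intro i hi
    split_ifs with h
    · exact abs_of_nonneg (sub_nonneg.2 (hp i hi h))
    · exact abs_of_nonpos (sub_nonpos.2 (hnp i hi h))
  have hsplit := sum_filter_add_sum_filter_not s p (fun i => f i - a)
  rw [sum_congr rfl habs, sum_ite, sum_neg_distrib]
  linarith

namespace SimpleGraph

variable {V : Type*} [Fintype V] (G : SimpleGraph V) [DecidableRel G.Adj]

theorem sum_degree_sub_averageDegree : ∑ v, ((G.degree v : ℝ) - G.averageDegree) = 0 := by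
  rcases isEmpty_or_nonempty V with _ | _
  · simp
  have hsum : ∑ v, (G.degree v : ℝ) = 2 * #G.edgeFinset := by
    exact_mod_cast G.sum_degrees_eq_twice_card_edges
  rw [sum_sub_distrib, hsum, sum_const, card_univ, nsmul_eq_mul, averageDegree,
    mul_div_cancel₀ _ (Nat.cast_ne_zero.2 Fintype.card_ne_zero), sub_self]

theorem sum_filter_degree_eq [DecidableEq V] (k : ℕ) (g : ℕ → ℝ) :
    ∑ v with G.degree v = k, g (G.degree v) = degCount G k * g k := by
  rw [sum_congr rfl fun v hv => by rw [(mem_filter.1 hv).2], sum_const, nsmul_eq_mul]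
  rfl

theorem degDev_eq_of_averageDegree_mem_Icc [DecidableEq V] (hdeg : ∀ v, G.degree v ≤ 4)
    (havg : G.averageDegree ∈ Set.Icc 2 3) :
    degDev G =
      2 * (degCount G 3 * (3 - G.averageDegree) + degCount G 4 * (4 - G.averageDegree)) := by
  have habove : ∀ v ∈ (univ : Finset V), 3 ≤ G.degree v → G.averageDegree ≤ G.degree v :=
    fun v _ h => havg.2.trans (by exact_mod_cast h)
  have hbelow : ∀ v ∈ (univ : Finset V), ¬ 3 ≤ G.degree v → (G.degree v : ℝ) ≤ G.averageDegree :=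
    fun v _ h => le_trans (by exact_mod_cast (by omega : G.degree v ≤ 2)) havg.1
  have h34 : univ.filter (fun v => 3 ≤ G.degree v) =
      univ.filter (fun v => G.degree v = 3) ∪ univ.filter (fun v => G.degree v = 4) := by
    ext v
    simp only [mem_filter, mem_union, mem_univ, true_and]
    have := hdeg v
    omega
  have hdisj : Disjoint (univ.filter (fun v => G.degree v = 3))
      (univ.filter (fun v => G.degree v = 4)) :=
    disjoint_filter.2 fun v _ h3 => by omega
  rw [degDev, ← averageDegree, sum_abs_sub_eq_two_mul_sum_filter _ _ _ _
    G.sum_degree_sub_averageDegree habove hbelow, h34, sum_union hdisj,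
    G.sum_filter_degree_eq 3 (fun d => d - G.averageDegree),
    G.sum_filter_degree_eq 4 (fun d => d - G.averageDegree)]
  norm_num

end SimpleGraph

theorem degDev_chemical_large_n_general {n : ℕ} (G : SimpleGraph (Fin n))
    [DecidableRel G.Adj] (hdeg : ∀ v, G.degree v ≤ 4)
    (c : ℕ) (hcge : 2 ≤ c) (hc : G.edgeFinset.card + 1 = n + c)
    (hlarge : 2 * c - 2 < n) :
    degDev G = 1 / n *
      ((2 * (n : ℝ) - 4 * c + 4) * degCount G 3 + (4 * (n : ℝ) - 4 * c + 4) * degCount G 4) := by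
  have hn : (0 : ℝ) < n := by exact_mod_cast (by omega : 0 < n)
  have havg : G.averageDegree = 2 * (n + c - 1) / n := by
    have hm : (#G.edgeFinset : ℝ) + 1 = n + c := by exact_mod_cast hc
    rw [SimpleGraph.averageDegree, Fintype.card_fin]
    congr 2
    linarith
  have hc2 : (2 : ℝ) ≤ c := by exact_mod_cast hcge
  have hcn : 2 * (c : ℝ) < n + 2 := by exact_mod_cast (by omega : 2 * c < n + 2)
  have hIcc : G.averageDegree ∈ Set.Icc 2 3 := by
    rw [havg, Set.mem_Icc, le_div_iff₀ hn, div_le_iff₀ hn]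
    constructor <;> linarith
  rw [G.degDev_eq_of_averageDegree_mem_Icc hdeg hIcc, havg]
  field_simp
  ring

theorem degDev_chemical_large_n {n : ℕ} (G : SimpleGraph (Fin n))
    [DecidableRel G.Adj] (hconn : G.Connected) (hdeg : ∀ v, G.degree v ≤ 4)
    (c : ℕ) (hcge : 2 ≤ c) (hc : G.edgeFinset.card + 1 = n + c)
    (hlarge : 2 * c - 2 < n) :
    degDev G = 1 / n *
      ((2 * (n : ℝ) - 4 * c + 4) * degCount G 3 + (4 * (n : ℝ) - 4 * c + 4) * degCount G 4) :=
  degDev_chemical_large_n_general G hdeg c hcge hc hlarge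
end

section
/- Let G be a connected chemical graph with n vertices and cyclomatic number c ≥ 2, where c = m − n + 1. If n ≤ 2c − 2, then s(G) = (4(n − c + 1)/n)·n₄(G). -/
open Finset

/-!
The hypothesis `n ≤ 2c - 2` makes the average degree `A = 2m/n = 2(n+c-1)/n` at least `3`, and
maximum degree `4` makes it at most `4`. Hence every vertex of degree `≤ 3` lies below the average
and only degree-`4` vertices lie (weakly) above it. Since the signed deviations `deg v - A` sum to
zero, `s(G)` is twice the total positive deviation, i.e. `2(4 - A)·n₄ = 4(n-c+1)/n · n₄`.
-/

lemma abs_natCast_sub_of_le_four {d : ℕ} {A : ℝ} (hd : d ≤ 4) (hA3 : 3 ≤ A) (hA4 : A ≤ 4) :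
    |(d : ℝ) - A| = A - d + if d = 4 then 2 * (4 - A) else 0 := by
  by_cases h4 : d = 4
  · subst h4
    rw [if_pos rfl, abs_of_nonneg (by push_cast; linarith)]
    ring
  · have hd3 : (d : ℝ) ≤ 3 := by exact_mod_cast (by omega : d ≤ 3)
    rw [if_neg h4, abs_of_nonpos (by linarith)]
    ring

theorem degDev_eq_of_degree_le_four {V : Type*} [Fintype V] [DecidableEq V]
    (G : SimpleGraph V) [DecidableRel G.Adj] (hdeg : ∀ v, G.degree v ≤ 4)
    (h3 : 3 * Fintype.card V ≤ 2 * #G.edgeFinset) :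
    degDev G = 2 * (4 - 2 * #G.edgeFinset / Fintype.card V) * degCount G 4 := by
  rcases isEmpty_or_nonempty V with hV | hV
  · simp [degDev, degCount]
  set A : ℝ := 2 * #G.edgeFinset / Fintype.card V
  have hn : (0 : ℝ) < Fintype.card V := by exact_mod_cast Fintype.card_pos
  have hsum : ∑ v, (G.degree v : ℝ) = Fintype.card V * A := by
    rw [← Nat.cast_sum, G.sum_degrees_eq_twice_card_edges, mul_div_cancel₀ _ hn.ne']
    push_cast
    rfl
  have hA3 : 3 ≤ A := by
    rw [le_div_iff₀ hn]
    exact_mod_cast h3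
  have hA4 : A ≤ 4 := by
    have : ∑ v, (G.degree v : ℝ) ≤ ∑ _v : V, 4 :=
      sum_le_sum fun v _ => by exact_mod_cast hdeg v
    rw [hsum, sum_const, card_univ, nsmul_eq_mul] at this
    exact le_of_mul_le_mul_left (by linarith) hn
  calc degDev G = ∑ v, ((A - G.degree v) + if G.degree v = 4 then 2 * (4 - A) else 0) :=
        sum_congr rfl fun v _ => abs_natCast_sub_of_le_four (hdeg v) hA3 hA4
    _ = (Fintype.card V * A - ∑ v, (G.degree v : ℝ)) + degCount G 4 * (2 * (4 - A)) := by
        rw [sum_add_distrib, sum_sub_distrib, ← sum_filter, sum_const, sum_const, card_univ,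
          nsmul_eq_mul, nsmul_eq_mul, degCount]
    _ = 2 * (4 - A) * degCount G 4 := by
        rw [hsum]
        ring

theorem degDev_chemical_small_n_general {n : ℕ} (G : SimpleGraph (Fin n))
    [DecidableRel G.Adj] (hdeg : ∀ v, G.degree v ≤ 4)
    (c : ℕ) (hc : G.edgeFinset.card + 1 = n + c)
    (hsmall : n ≤ 2 * c - 2) :
    degDev G = 4 * ((n : ℝ) - c + 1) / n * degCount G 4 := by
  rcases Nat.eq_zero_or_pos n with rfl | hn
  · simp [degDev, degCount]
  have hm : (#G.edgeFinset : ℝ) = n + c - 1 := by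
    rw [eq_sub_iff_add_eq]
    exact_mod_cast hc
  rw [degDev_eq_of_degree_le_four G hdeg (by rw [Fintype.card_fin]; omega), Fintype.card_fin, hm]
  field_simp
  ring

theorem degDev_chemical_small_n {n : ℕ} (G : SimpleGraph (Fin n))
    [DecidableRel G.Adj] (hconn : G.Connected) (hdeg : ∀ v, G.degree v ≤ 4)
    (c : ℕ) (hcge : 2 ≤ c) (hc : G.edgeFinset.card + 1 = n + c)
    (hsmall : n ≤ 2 * c - 2) :
    degDev G = 4 * ((n : ℝ) - c + 1) / n * degCount G 4 :=
  degDev_chemical_small_n_general G hdeg c hc hsmall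
end
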